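/- The functionals H₁ = ∫(−(5/3)u)dx and H₂ = ∫((5/6)u₁² − (5/2)v₁² + (4/3)u³ + (2/3)v³ − 2uv²)dx are in involution with respect to the Poisson bracket defined by P: the differential polynomial ⟨δH₁, P(δH₂)⟩ = (δh₁/δu)·(P δH₂)¹ + (δh₁/δv)·(P δH₂)² is a total x-derivative (its variational derivatives with respect to u and v vanish). -/
import Mathlib


open MvPolynomial

/-- The differential polynomial ring ℚ[u, v, u₁, v₁, u₂, v₂, ...]:
variable `(0, i)` is `uᵢ`, `(1, i)` is `vᵢ`. -/
abbrev DP : Type := MvPolynomial (Fin 2 × ℕ) ℚ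

noncomputable def U (i : ℕ) : DP := X (0, i)
noncomputable def V (i : ℕ) : DP := X (1, i)

/-- The total derivative Dₓ, the unique derivation with Dₓ(uᵢ)=uᵢ₊₁, Dₓ(vᵢ)=vᵢ₊₁. -/
noncomputable def Dx : Derivation ℚ DP DP :=
  mkDerivation ℚ (fun p => X (p.1, p.2 + 1))

noncomputable def DxL : DP →ₗ[ℚ] DP := Dx.toLinearMap

/-- Largest derivative order occurring in a differential polynomial. -/
noncomputable def maxIdx (h : DP) : ℕ := h.vars.sup (fun p => p.2)

/-- Variational derivative δh/δu = Σₖ (−Dₓ)ᵏ(∂h/∂uₖ). -/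
noncomputable def varU (h : DP) : DP :=
  ∑ k ∈ Finset.range (maxIdx h + 1), ((-DxL) ^ k) (pderiv (0, k) h)

/-- Variational derivative δh/δv. -/
noncomputable def varV (h : DP) : DP :=
  ∑ k ∈ Finset.range (maxIdx h + 1), ((-DxL) ^ k) (pderiv (1, k) h)

/-- The evolutionary derivation D_Q with D_Q(uᵢ)=Dₓⁱ(Q¹), D_Q(vᵢ)=Dₓⁱ(Q²). -/
noncomputable def evDer (Q1 Q2 : DP) : Derivation ℚ DP DP :=
  mkDerivation ℚ (fun p => (DxL ^ p.2) (if p.1 = 0 then Q1 else Q2))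

/-- Right-hand side F₁ of the Mikhailov–Novikov–Wang system. -/
noncomputable def F1 : DP :=
  -(5/3 : ℚ) • U 5 - 10 * V 0 * V 3 - 15 * V 1 * V 2 + 10 * U 0 * U 3
    + 25 * U 1 * U 2 - 6 * V 0 ^ 2 * V 1 + 6 * V 0 ^ 2 * U 1
    + 12 * U 0 * V 0 * V 1 - 12 * U 0 ^ 2 * U 1

/-- Right-hand side F₂ of the Mikhailov–Novikov–Wang system. -/
noncomputable def F2 : DP :=
  15 * V 5 + 30 * V 1 * V 2 - 30 * U 0 * V 3 - 45 * U 1 * V 2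
    - 35 * U 2 * V 1 - 10 * V 0 * U 3 - 6 * V 0 ^ 2 * V 1 + 6 * V 0 ^ 2 * U 1
    + 12 * U 0 ^ 2 * V 1 + 12 * U 0 * V 0 * U 1

/-- Action of the Hamiltonian operator P on a column (g₁,g₂): first component. -/
noncomputable def Pact1 (g1 g2 : DP) : DP :=
  ((DxL ^ 3) g1 - (6/5 : ℚ) • (U 0 * DxL g1) - (3/5 : ℚ) • (U 1 * g1))
    + (-(6/5 : ℚ) • (V 0 * DxL g2) - (3/5 : ℚ) • (V 1 * g2))

/-- Action of the Hamiltonian operator P on a column (g₁,g₂): second component. -/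
noncomputable def Pact2 (g1 g2 : DP) : DP :=
  (-(6/5 : ℚ) • (V 0 * DxL g1) - (3/5 : ℚ) • (V 1 * g1))
    + (3 • (DxL ^ 3) g2 - (((18/5 : ℚ) • U 0 + (12/5 : ℚ) • V 0) * DxL g2)
        - (9/5 : ℚ) • (U 1 * g2) - (6/5 : ℚ) • (V 1 * g2))


section Aux

lemma Dx_X (p : Fin 2 × ℕ) : Dx (X p) = X (p.1, p.2 + 1) := by
  unfold Dx; exact mkDerivation_X (R := ℚ) (fun q : Fin 2 × ℕ => X (q.1, q.2 + 1)) p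

lemma pderiv_Dx_succ (i : Fin 2) (k : ℕ) (h : DP) :
    pderiv (i, k + 1) (Dx h) = Dx (pderiv (i, k + 1) h) + pderiv (i, k) h := by
  have key : (⁅(pderiv (i, k + 1) : Derivation ℚ DP DP), Dx⁆ : Derivation ℚ DP DP)
      = pderiv (i, k) := by
    apply derivation_ext
    rintro ⟨j, m⟩
    rw [Derivation.commutator_apply, Dx_X]
    by_cases hq : (j, m) = (i, k)
    · obtain ⟨h1, h2⟩ := Prod.mk.injEq .. ▸ hq
      subst h1; subst h2
      simp
    · by_cases hq2 : (j, m) = (i, k + 1)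
      · have h1 : ((j, m + 1) : Fin 2 × ℕ) ≠ (i, k + 1) := by
          simp only [ne_eq, Prod.mk.injEq, not_and] at hq2 ⊢
          intro hj hm; omega
        rw [pderiv_X_of_ne h1, hq2, pderiv_X_self, Derivation.map_one_eq_zero,
          pderiv_X_of_ne (show ((i, k + 1) : Fin 2 × ℕ) ≠ (i, k) by simp), sub_zero]
      · have h1 : ((j, m + 1) : Fin 2 × ℕ) ≠ (i, k + 1) := by
          simp only [ne_eq, Prod.mk.injEq, not_and] at hq ⊢
          intro hj hm
          exact hq hj (by omega)
        rw [pderiv_X_of_ne h1, pderiv_X_of_ne hq2, map_zero, pderiv_X_of_ne hq, sub_zero]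
  have hk := DFunLike.congr_fun key h
  rw [Derivation.commutator_apply] at hk
  rw [← hk]; ring

lemma pderiv_Dx_zero (i : Fin 2) (h : DP) :
    pderiv (i, 0) (Dx h) = Dx (pderiv (i, 0) h) := by
  have key : (⁅(pderiv (i, 0) : Derivation ℚ DP DP), Dx⁆ : Derivation ℚ DP DP) = 0 := by
    apply derivation_ext
    rintro ⟨j, m⟩
    rw [Derivation.commutator_apply, Dx_X]
    have h1 : ((j, m + 1) : Fin 2 × ℕ) ≠ (i, 0) := by
      simp only [ne_eq, Prod.mk.injEq, not_and]
      intro _ hm; omega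
    by_cases hq : (j, m) = (i, 0)
    · rw [pderiv_X_of_ne h1, hq, pderiv_X_self, Derivation.map_one_eq_zero, sub_zero,
        Derivation.zero_apply]
    · rw [pderiv_X_of_ne h1, pderiv_X_of_ne hq, map_zero, sub_zero, Derivation.zero_apply]
  have hk := DFunLike.congr_fun key h
  rw [Derivation.commutator_apply, Derivation.zero_apply, sub_eq_zero] at hk
  exact hk

lemma telescope (i : Fin 2) (g : DP) (N : ℕ) :
    ∑ k ∈ Finset.range (N + 1), ((-DxL) ^ k) (pderiv (i, k) (Dx g))
      = -(((-DxL) ^ (N + 1)) (pderiv (i, N) g)) := by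
  induction N with
  | zero =>
      rw [Finset.sum_range_one, pow_zero, Module.End.one_apply, pderiv_Dx_zero,
        pow_one, LinearMap.neg_apply, neg_neg]
      rfl
  | succ n ih =>
      rw [Finset.sum_range_succ, ih, pderiv_Dx_succ, map_add]
      have hpow : ∀ (x : DP), ((-DxL) ^ (n + 1)) (DxL x) = -(((-DxL) ^ (n + 2)) x) := by
        intro x
        have h2 : (-DxL) ^ (n + 2) = (-DxL) ^ (n + 1) * (-DxL) := by rw [← pow_succ]
        rw [h2, Module.End.mul_apply, LinearMap.neg_apply, map_neg, neg_neg]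
      have hDx : ((-DxL) ^ (n + 1)) (Dx (pderiv (i, n + 1) g)) =
          -(((-DxL) ^ (n + 2)) (pderiv (i, n + 1) g)) := hpow _
      rw [hDx]
      ring

lemma pderiv_high (i : Fin 2) (k : ℕ) (h : DP) (hk : maxIdx h < k) :
    pderiv (i, k) h = 0 := by
  apply pderiv_eq_zero_of_notMem_vars
  intro hmem
  exact absurd (Finset.le_sup (f := fun p : Fin 2 × ℕ => p.2) hmem) (by simpa [maxIdx] using hk)

lemma var_sum_ext (i : Fin 2) (h : DP) (N : ℕ) (hN : maxIdx h ≤ N) :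
    ∑ k ∈ Finset.range (N + 1), ((-DxL) ^ k) (pderiv (i, k) h)
      = ∑ k ∈ Finset.range (maxIdx h + 1), ((-DxL) ^ k) (pderiv (i, k) h) := by
  symm
  apply Finset.sum_subset
  · exact Finset.range_subset_range.mpr (by omega)
  · intro k hk1 hk2
    rw [pderiv_high i k h (by simp at hk2; omega), map_zero]

lemma var_Dx (i : Fin 2) (g : DP) :
    ∑ k ∈ Finset.range (maxIdx (Dx g) + 1), ((-DxL) ^ k) (pderiv (i, k) (Dx g)) = 0 := by
  set N := max (maxIdx (Dx g)) (maxIdx g + 1) with hN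
  rw [← var_sum_ext i (Dx g) N (le_max_left _ _), telescope,
    pderiv_high i N g (by omega), map_zero, neg_zero]

lemma varU_Dx (g : DP) : varU (Dx g) = 0 := var_Dx 0 g
lemma varV_Dx (g : DP) : varV (Dx g) = 0 := var_Dx 1 g

end Aux

lemma smul_cancel {c : ℚ} (hc : c ≠ 0) {x y : DP} (h : c • x = c • y) : x = y := by
  have h2 := congrArg (fun z => c⁻¹ • z) h
  simpa [smul_smul, inv_mul_cancel₀ hc] using h2

lemma qmul_smul (a : ℚ) (p q : DP) : p * (a • q) = a • (p * q) := mul_smul_comm a p q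
lemma qsmul_mul (a : ℚ) (p q : DP) : (a • p) * q = a • (p * q) := smul_mul_assoc a p q

lemma mul_C' (a : ℚ) (p : DP) : p * C a = a • p := by rw [mul_comm, C_mul']

lemma DxL_apply (x : DP) : DxL x = Dx x := rfl

lemma Dx_ofNat (n : ℕ) [n.AtLeastTwo] : Dx (OfNat.ofNat n : DP) = 0 := by
  have h : (OfNat.ofNat n : DP) = ((OfNat.ofNat n : ℕ) : DP) := (Nat.cast_ofNat).symm
  rw [h, Derivation.map_natCast]

noncomputable def gInt : DP :=
  C (20/3 : ℚ) * U 0 ^ 3 + C (-50/3 : ℚ) * (U 0 * U 2) + C (-10 : ℚ) * (U 0 * V 0 ^ 2)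
    + C (-25/2 : ℚ) * U 1 ^ 2 + C (25/9 : ℚ) * U 4 + C (10/3 : ℚ) * V 0 ^ 3
    + C (50/3 : ℚ) * (V 0 * V 2) + C (25/6 : ℚ) * V 1 ^ 2

set_option maxHeartbeats 4000000 in
lemma integrand_eq :
    (C (-5/3 : ℚ)) * Pact1 (-(5/3 : ℚ) • U 2 + 4 * U 0 ^ 2 - 2 * V 0 ^ 2) ((5 : ℚ) • V 2 + 2 * V 0 ^ 2 - 4 * U 0 * V 0)
      + 0 * Pact2 (-(5/3 : ℚ) • U 2 + 4 * U 0 ^ 2 - 2 * V 0 ^ 2) ((5 : ℚ) • V 2 + 2 * V 0 ^ 2 - 4 * U 0 * V 0)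
      = Dx gInt := by
  rw [zero_mul, add_zero]
  unfold Pact1 gInt U V
  rw [show (4 : DP) = C (4 : ℚ) from (map_ofNat C 4).symm,
      show (2 : DP) = C (2 : ℚ) from (map_ofNat C 2).symm]
  simp only [pow_succ, pow_zero, one_mul, Module.End.mul_apply, Module.End.one_apply, DxL_apply,
    MvPolynomial.smul_eq_C_mul, map_add, map_sub, map_neg, map_mul, Derivation.leibniz,
    Derivation.leibniz_pow, derivation_C, Dx_ofNat, Dx_X, smul_eq_mul, nsmul_eq_mul,
    map_zero, mul_zero, zero_mul, add_zero, zero_add, Nat.cast_ofNat]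
  norm_num
  simp only [mul_add, add_mul, mul_sub, sub_mul, neg_mul, mul_neg, neg_neg, neg_smul, smul_neg,
    smul_add, smul_sub, C_mul', mul_C', smul_mul_assoc, mul_smul_comm, qmul_smul, qsmul_mul,
    smul_smul]
  apply smul_cancel (show (90 : ℚ) ≠ 0 by norm_num)
  simp only [mul_add, add_mul, mul_sub, sub_mul, neg_mul, mul_neg, neg_neg, smul_add, smul_sub,
    smul_neg, neg_smul, smul_smul, smul_mul_assoc, mul_smul_comm, qmul_smul, qsmul_mul]
  norm_num
  simp only [neg_smul, MvPolynomial.smul_eq_C_mul, map_ofNat, one_smul]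
  ring

/-- H₁ and H₂ are in involution w.r.t. the Poisson bracket of P:
⟨δH₁, PδH₂⟩ = (−5/3)·(PδH₂)¹ + 0·(PδH₂)² is a total x-derivative
(its variational derivatives vanish). -/
theorem H1_H2_in_involution :
    varU ((C (-5/3 : ℚ)) * Pact1 (-(5/3 : ℚ) • U 2 + 4 * U 0 ^ 2 - 2 * V 0 ^ 2) ((5 : ℚ) • V 2 + 2 * V 0 ^ 2 - 4 * U 0 * V 0)
          + 0 * Pact2 (-(5/3 : ℚ) • U 2 + 4 * U 0 ^ 2 - 2 * V 0 ^ 2) ((5 : ℚ) • V 2 + 2 * V 0 ^ 2 - 4 * U 0 * V 0)) = 0 ∧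
    varV ((C (-5/3 : ℚ)) * Pact1 (-(5/3 : ℚ) • U 2 + 4 * U 0 ^ 2 - 2 * V 0 ^ 2) ((5 : ℚ) • V 2 + 2 * V 0 ^ 2 - 4 * U 0 * V 0)
          + 0 * Pact2 (-(5/3 : ℚ) • U 2 + 4 * U 0 ^ 2 - 2 * V 0 ^ 2) ((5 : ℚ) • V 2 + 2 * V 0 ^ 2 - 4 * U 0 * V 0)) = 0 := by
  constructor
  · rw [integrand_eq]; exact varU_Dx _
  · rw [integrand_eq]; exact varV_Dx _
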